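/- Let A, B ∈ ℝ^{m×n} with I_l, I_u the entrywise min and max of A and B. Then every matrix in the interval hull I(A,B) is minimally semipositive if and only if I_l is semipositive and I_u is minimally semipositive. -/

import Mathlib

open Matrix Finset

def IsPMatrix {n : ℕ} (A : Matrix (Fin n) (Fin n) ℝ) : Prop :=
  ∀ s : Finset (Fin n),
    0 < (A.submatrix (fun i : s => (i : Fin n)) (fun j : s => (j : Fin n))).det

def IsNMatrix {n : ℕ} (A : Matrix (Fin n) (Fin n) ℝ) : Prop :=
  ∀ s : Finset (Fin n), s.Nonempty →
    (A.submatrix (fun i : s => (i : Fin n)) (fun j : s => (j : Fin n))).det < 0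

def IsAlmostPMatrix {n : ℕ} (A : Matrix (Fin n) (Fin n) ℝ) : Prop :=
  (∀ s : Finset (Fin n), s.Nonempty → s ≠ Finset.univ →
    0 < (A.submatrix (fun i : s => (i : Fin n)) (fun j : s => (j : Fin n))).det) ∧
  A.det < 0

def IntervalHull {m n : ℕ} (A B : Matrix (Fin m) (Fin n) ℝ) :
    Set (Matrix (Fin m) (Fin n) ℝ) :=
  {C | ∀ i j, ∃ t : ℝ, t ∈ Set.Icc (0:ℝ) 1 ∧ C i j = t * A i j + (1 - t) * B i j}

noncomputable def Iu {m n : ℕ} (A B : Matrix (Fin m) (Fin n) ℝ) : Matrix (Fin m) (Fin n) ℝ :=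
  fun i j => max (A i j) (B i j)

noncomputable def Il {m n : ℕ} (A B : Matrix (Fin m) (Fin n) ℝ) : Matrix (Fin m) (Fin n) ℝ :=
  fun i j => min (A i j) (B i j)

noncomputable def Ic {m n : ℕ} (A B : Matrix (Fin m) (Fin n) ℝ) : Matrix (Fin m) (Fin n) ℝ :=
  fun i j => (A i j + B i j) / 2

noncomputable def Dlt {m n : ℕ} (A B : Matrix (Fin m) (Fin n) ℝ) : Matrix (Fin m) (Fin n) ℝ :=
  fun i j => (Iu A B i j - Il A B i j) / 2

noncomputable def Iz {n : ℕ} (A B : Matrix (Fin n) (Fin n) ℝ) (z : Fin n → ℝ) :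
    Matrix (Fin n) (Fin n) ℝ :=
  Ic A B - Matrix.diagonal z * Dlt A B * Matrix.diagonal z

def SignVec {n : ℕ} (z : Fin n → ℝ) : Prop := ∀ i, z i = 1 ∨ z i = -1

def BlockPattern {n : ℕ} (A : Matrix (Fin n) (Fin n) ℝ) (J : Finset (Fin n)) : Prop :=
  (∀ i ∈ J, ∀ j ∈ J, A i j < 0) ∧ (∀ i ∉ J, ∀ j ∉ J, A i j < 0) ∧
  (∀ i ∈ J, ∀ j ∉ J, 0 < A i j) ∧ (∀ i ∉ J, ∀ j ∈ J, 0 < A i j)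

def IsNMatrixSecond {n : ℕ} (A : Matrix (Fin n) (Fin n) ℝ) : Prop :=
  IsNMatrix A ∧ ∀ i j, A i j ≤ 0

def IsNMatrixFirst {n : ℕ} (A : Matrix (Fin n) (Fin n) ℝ) (J : Finset (Fin n)) : Prop :=
  IsNMatrix A ∧ BlockPattern A J

def IsAlmostPSecond {n : ℕ} (A : Matrix (Fin n) (Fin n) ℝ) : Prop :=
  IsUnit A.det ∧ IsNMatrix A⁻¹ ∧ ∀ i j, A⁻¹ i j < 0

def IsAlmostPFirst {n : ℕ} (A : Matrix (Fin n) (Fin n) ℝ) (J : Finset (Fin n)) : Prop :=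
  IsUnit A.det ∧ IsNMatrixFirst A⁻¹ J

def InJ {n : ℕ} (J : Finset (Fin n)) (x : Fin n → ℝ) : Prop :=
  (∀ j ∈ J, 0 < x j) ∧ (∀ j ∉ J, x j < 0)

def Semipos {p q : Type*} [Fintype q] (M : Matrix p q ℝ) : Prop :=
  ∃ x : q → ℝ, (∀ j, 0 ≤ x j) ∧ ∀ i, 0 < M.mulVec x i

def MinSemipos {m n : ℕ} (M : Matrix (Fin m) (Fin n) ℝ) : Prop :=
  Semipos M ∧
  ∀ j₀ : Fin n, ¬ Semipos (M.submatrix id (fun j : {j : Fin n // j ≠ j₀} => (j : Fin n)))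

/-! Semipositivity is monotone in the entries, and every matrix of `I(A, B)` lies entrywise
between `Il A B` and `Iu A B`, both of which belong to `I(A, B)`. Deleting a column preserves
entrywise order, so minimal semipositivity of `Iu A B` forbids every column-deleted submatrix
of a hull matrix from being semipositive. -/

theorem Semipos.mono {p q : Type*} [Fintype q] {M N : Matrix p q ℝ}
    (hN : Semipos N) (hle : ∀ i j, N i j ≤ M i j) : Semipos M := by
  obtain ⟨x, hx, hNx⟩ := hN
  refine ⟨x, hx, fun i => (hNx i).trans_le ?_⟩
  exact Finset.sum_le_sum fun j _ => mul_le_mul_of_nonneg_right (hle i j) (hx j)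

theorem MinSemipos.of_le {m n : ℕ} {M C : Matrix (Fin m) (Fin n) ℝ}
    (hM : MinSemipos M) (hC : Semipos C) (hle : ∀ i j, C i j ≤ M i j) : MinSemipos C :=
  ⟨hC, fun j₀ hCj₀ => hM.2 j₀ (hCj₀.mono fun i j => hle i j)⟩

theorem min_le_convex_combo {a b t : ℝ} (ht : t ∈ Set.Icc (0 : ℝ) 1) :
    min a b ≤ t * a + (1 - t) * b := by
  have h₁ := mul_le_mul_of_nonneg_left (min_le_left a b) ht.1
  have h₂ := mul_le_mul_of_nonneg_left (min_le_right a b) (sub_nonneg.2 ht.2)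
  linarith

theorem convex_combo_le_max {a b t : ℝ} (ht : t ∈ Set.Icc (0 : ℝ) 1) :
    t * a + (1 - t) * b ≤ max a b := by
  have h₁ := mul_le_mul_of_nonneg_left (le_max_left a b) ht.1
  have h₂ := mul_le_mul_of_nonneg_left (le_max_right a b) (sub_nonneg.2 ht.2)
  linarith

section IntervalHull

variable {m n : ℕ} (A B : Matrix (Fin m) (Fin n) ℝ)

theorem Il_mem_intervalHull : Il A B ∈ IntervalHull A B := by
  intro i j
  rcases le_total (A i j) (B i j) with h | h
  · exact ⟨1, Set.right_mem_Icc.2 zero_le_one, by simp [Il, min_eq_left h]⟩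
  · exact ⟨0, Set.left_mem_Icc.2 zero_le_one, by simp [Il, min_eq_right h]⟩

theorem Iu_mem_intervalHull : Iu A B ∈ IntervalHull A B := by
  intro i j
  rcases le_total (A i j) (B i j) with h | h
  · exact ⟨0, Set.left_mem_Icc.2 zero_le_one, by simp [Iu, max_eq_right h]⟩
  · exact ⟨1, Set.right_mem_Icc.2 zero_le_one, by simp [Iu, max_eq_left h]⟩

variable {A B}

theorem Il_le_of_mem_intervalHull {C : Matrix (Fin m) (Fin n) ℝ} (hC : C ∈ IntervalHull A B)
    (i : Fin m) (j : Fin n) : Il A B i j ≤ C i j := by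
  obtain ⟨t, ht, hCij⟩ := hC i j
  exact hCij ▸ min_le_convex_combo ht

theorem le_Iu_of_mem_intervalHull {C : Matrix (Fin m) (Fin n) ℝ} (hC : C ∈ IntervalHull A B)
    (i : Fin m) (j : Fin n) : C i j ≤ Iu A B i j := by
  obtain ⟨t, ht, hCij⟩ := hC i j
  exact hCij ▸ convex_combo_le_max ht

end IntervalHull

theorem stmt18 {m n : ℕ} (A B : Matrix (Fin m) (Fin n) ℝ) :
    (∀ C ∈ IntervalHull A B, MinSemipos C) ↔
      (Semipos (Il A B) ∧ MinSemipos (Iu A B)) := by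
  refine ⟨fun h => ⟨(h _ (Il_mem_intervalHull A B)).1, h _ (Iu_mem_intervalHull A B)⟩, ?_⟩
  rintro ⟨hIl, hIu⟩ C hC
  exact hIu.of_le (hIl.mono (Il_le_of_mem_intervalHull hC)) (le_Iu_of_mem_intervalHull hC)
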